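/- For all single-qubit Pauli matrices P₁, P₂ ∈ {X, Y, Z}, the single-qubit trap with Pauli errors in two neighboring bands satisfies (1/2) ∑_{t ∈ {0,1}} (1/4) ∑_{V ∈ {H,S}} ∑_{V' ∈ {H,S}} |⟨+| H^t · V'† · P₂ · V' · V† · P₁ · V · H^t |+⟩|² ≤ 3/4, where ⟨+| M |+⟩ denotes (conjugate-transpose of |+⟩) · M · |+⟩ for a 2 × 2 matrix M. (Two-band errors of class 3 in neighboring bands are detected with probability at least 1/4; single-qubit case.) -/

import Mathlib

open Matrix

/-- The Pauli matrix `X`. -/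
noncomputable def Xm : Matrix (Fin 2) (Fin 2) ℂ := !![0, 1; 1, 0]

/-- The Pauli matrix `Y`. -/
noncomputable def Ym : Matrix (Fin 2) (Fin 2) ℂ := !![0, -Complex.I; Complex.I, 0]

/-- The Pauli matrix `Z`. -/
noncomputable def Zm : Matrix (Fin 2) (Fin 2) ℂ := !![1, 0; 0, -1]

/-- The Hadamard matrix `H = (1/√2)!![1,1;1,-1]`. -/
noncomputable def Hm : Matrix (Fin 2) (Fin 2) ℂ :=
  (1 / ((Real.sqrt 2 : ℝ) : ℂ)) • !![1, 1; 1, -1]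

/-- The phase matrix `S = diag(1, i)`. -/
noncomputable def Sm : Matrix (Fin 2) (Fin 2) ℂ := !![1, 0; 0, Complex.I]

/-- The single-qubit state `|+⟩ = (1/√2)(1,1)`. -/
noncomputable def plus1 : Fin 2 → ℂ := fun _ => 1 / ((Real.sqrt 2 : ℝ) : ℂ)

/-- The matrix element `⟨+| M |+⟩` for a 2 × 2 matrix `M`. -/
noncomputable def plusBraket1 (M : Matrix (Fin 2) (Fin 2) ℂ) : ℂ :=
  ∑ x, ∑ y, star (plus1 x) * M x y * plus1 y

/-!
Up to a phase of modulus one, a Pauli matrix `X^a Z^b` is determined by its label `(a, b) ∈ 𝔽₂²`: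
products add labels, and conjugation by `H` or `S` acts on labels linearly. Hence the matrix
`H^t V'† P₂ V' V† P₁ V H^t` is a phased Pauli matrix whose label is computed in `𝔽₂²`, and since
`⟨+| X^a Z^b |+⟩ = [b = 0]`, each summand is `0` or `1` according to that label. The bound becomes a
count: for each of the nine pairs of labels of `P₁, P₂`, at most six of the eight triples
`(t, V, V')` leave the error undetected.
-/

abbrev PauliLabel := ZMod 2 × ZMod 2

noncomputable def pauli (p : PauliLabel) : Matrix (Fin 2) (Fin 2) ℂ :=
  Xm ^ p.1.val * Zm ^ p.2.val

def IsPhasedPauli (p : PauliLabel) (M : Matrix (Fin 2) (Fin 2) ℂ) : Prop :=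
  ∃ c : ℂ, ‖c‖ = 1 ∧ M = c • pauli p

/-- Conjugation by `H` swaps `X` and `Z`; conjugation by `S` sends `X` to `Y ∼ XZ` and fixes `Z`. -/
def gateAction : Fin 2 → PauliLabel → PauliLabel :=
  ![Prod.swap, fun p => (p.1, p.1 + p.2)]

theorem PauliLabel.forall_iff {P : PauliLabel → Prop} :
    (∀ p, P p) ↔ P (0, 0) ∧ P (1, 0) ∧ P (0, 1) ∧ P (1, 1) := by
  refine ⟨fun h => ⟨h _, h _, h _, h _⟩, ?_⟩
  rintro ⟨h₀₀, h₁₀, h₀₁, h₁₁⟩ ⟨a, b⟩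
  fin_cases a <;> fin_cases b <;> assumption

@[simp] theorem pauli_zero_zero : pauli (0, 0) = 1 := by simp [pauli]
@[simp] theorem pauli_one_zero : pauli (1, 0) = Xm := by simp [pauli, ZMod.val_one]
@[simp] theorem pauli_zero_one : pauli (0, 1) = Zm := by simp [pauli, ZMod.val_one]
@[simp] theorem pauli_one_one : pauli (1, 1) = Xm * Zm := by simp [pauli, ZMod.val_one]

theorem pauli_mul_pauli (p q : PauliLabel) :
    pauli p * pauli q = (-1 : ℂ) ^ (p.2.val * q.1.val) • pauli (p + q) := by
  revert p q
  simp only [PauliLabel.forall_iff]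
  simp [CharTwo.add_self_eq_zero, ZMod.val_one, Xm, Zm, Matrix.one_fin_two]

theorem Hm_conjTranspose : Hmᴴ = Hm := by
  ext i j
  fin_cases i <;> fin_cases j <;> simp [Hm]

theorem one_div_sqrt_two_mul_self :
    (1 / ((Real.sqrt 2 : ℝ) : ℂ)) * (1 / ((Real.sqrt 2 : ℝ) : ℂ)) = 1 / 2 := by
  rw [div_mul_div_comm, one_mul, ← Complex.ofReal_mul, Real.mul_self_sqrt zero_le_two]
  norm_num

theorem Hm_mul_mul_Hm (M : Matrix (Fin 2) (Fin 2) ℂ) :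
    Hm * M * Hm = (1 / 2 : ℂ) • (!![1, 1; 1, -1] * M * !![1, 1; 1, -1]) := by
  rw [Hm, Matrix.smul_mul, Matrix.mul_smul, Matrix.smul_mul, smul_smul,
    one_div_sqrt_two_mul_self]

theorem Hm_conj_pauli (p : PauliLabel) :
    Hmᴴ * pauli p * Hm = (-1 : ℂ) ^ (p.1.val * p.2.val) • pauli p.swap := by
  rw [Hm_conjTranspose, Hm_mul_mul_Hm]
  revert p
  simp only [PauliLabel.forall_iff]
  simp [ZMod.val_one, Xm, Zm, Matrix.one_fin_two]
  norm_num

theorem Sm_conjTranspose : Smᴴ = !![1, 0; 0, -Complex.I] := by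
  ext i j
  fin_cases i <;> fin_cases j <;> simp [Sm]

theorem Sm_conj_pauli (p : PauliLabel) :
    Smᴴ * pauli p * Sm = (-Complex.I) ^ p.1.val • pauli (p.1, p.1 + p.2) := by
  rw [Sm_conjTranspose, Sm]
  revert p
  simp only [PauliLabel.forall_iff]
  simp [CharTwo.add_self_eq_zero, ZMod.val_one, Xm, Zm, Matrix.one_fin_two]

theorem plusBraket1_eq (M : Matrix (Fin 2) (Fin 2) ℂ) :
    plusBraket1 M = (M 0 0 + M 0 1 + M 1 0 + M 1 1) / 2 := by
  have h : star (1 / ((Real.sqrt 2 : ℝ) : ℂ)) = 1 / ((Real.sqrt 2 : ℝ) : ℂ) := by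
    simp [Complex.conj_ofReal]
  simp only [plusBraket1, plus1, h, Fin.sum_univ_two, mul_right_comm _ (M _ _),
    one_div_sqrt_two_mul_self]
  ring

theorem plusBraket1_smul (c : ℂ) (M : Matrix (Fin 2) (Fin 2) ℂ) :
    plusBraket1 (c • M) = c * plusBraket1 M := by
  simp only [plusBraket1_eq, Matrix.smul_apply, smul_eq_mul]
  ring

theorem plusBraket1_pauli (p : PauliLabel) :
    plusBraket1 (pauli p) = if p.2 = 0 then 1 else 0 := by
  revert p
  simp only [PauliLabel.forall_iff]
  simp [plusBraket1_eq, Xm, Zm, Matrix.one_fin_two]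

theorem IsPhasedPauli.mul {p q : PauliLabel} {M N : Matrix (Fin 2) (Fin 2) ℂ}
    (hM : IsPhasedPauli p M) (hN : IsPhasedPauli q N) : IsPhasedPauli (p + q) (M * N) := by
  obtain ⟨c, hc, rfl⟩ := hM
  obtain ⟨d, hd, rfl⟩ := hN
  refine ⟨c * d * (-1) ^ (p.2.val * q.1.val), by simp [hc, hd], ?_⟩
  rw [Matrix.smul_mul, Matrix.mul_smul, pauli_mul_pauli, smul_smul, smul_smul, mul_assoc]

theorem IsPhasedPauli.conj {f : PauliLabel → PauliLabel} {U : Matrix (Fin 2) (Fin 2) ℂ}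
    (hU : ∀ p, IsPhasedPauli (f p) (Uᴴ * pauli p * U)) {p : PauliLabel}
    {M : Matrix (Fin 2) (Fin 2) ℂ} (hM : IsPhasedPauli p M) :
    IsPhasedPauli (f p) (Uᴴ * M * U) := by
  obtain ⟨c, hc, rfl⟩ := hM
  obtain ⟨d, hd, hpU⟩ := hU p
  refine ⟨c * d, by simp [hc, hd], ?_⟩
  rw [Matrix.mul_smul, Matrix.smul_mul, hpU, smul_smul]

theorem IsPhasedPauli.Hm_conj {p : PauliLabel} {M : Matrix (Fin 2) (Fin 2) ℂ}
    (hM : IsPhasedPauli p M) : IsPhasedPauli p.swap (Hm * M * Hm) := by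
  simpa only [Hm_conjTranspose] using hM.conj fun q => ⟨_, by simp, Hm_conj_pauli q⟩

theorem IsPhasedPauli.Sm_conj {p : PauliLabel} {M : Matrix (Fin 2) (Fin 2) ℂ}
    (hM : IsPhasedPauli p M) : IsPhasedPauli (p.1, p.1 + p.2) (Smᴴ * M * Sm) :=
  hM.conj fun q => ⟨_, by simp, Sm_conj_pauli q⟩

theorem IsPhasedPauli.gate_conj {p : PauliLabel} {M : Matrix (Fin 2) (Fin 2) ℂ}
    (hM : IsPhasedPauli p M) (v : Fin 2) :
    IsPhasedPauli (gateAction v p) ((![Hm, Sm] v)ᴴ * M * ![Hm, Sm] v) := by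
  fin_cases v
  · simpa [gateAction, Hm_conjTranspose] using hM.Hm_conj
  · exact hM.Sm_conj

theorem IsPhasedPauli.Hm_pow_conj {p : PauliLabel} {M : Matrix (Fin 2) (Fin 2) ℂ}
    (hM : IsPhasedPauli p M) (n : ℕ) :
    IsPhasedPauli (Prod.swap^[n] p) (Hm ^ n * M * Hm ^ n) := by
  induction n generalizing p M with
  | zero => simpa using hM
  | succ n ih =>
    have h : Hm ^ (n + 1) * M * Hm ^ (n + 1) = Hm ^ n * (Hm * M * Hm) * Hm ^ n := by
      simp only [pow_succ, Matrix.mul_assoc, (Commute.self_pow Hm n).eq]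
    rw [h, Function.iterate_succ_apply]
    exact ih hM.Hm_conj

theorem IsPhasedPauli.norm_plusBraket1_sq {p : PauliLabel} {M : Matrix (Fin 2) (Fin 2) ℂ}
    (hM : IsPhasedPauli p M) : ‖plusBraket1 M‖ ^ 2 = if p.2 = 0 then 1 else 0 := by
  obtain ⟨c, hc, rfl⟩ := hM
  rw [plusBraket1_smul, plusBraket1_pauli, norm_mul, hc, one_mul]
  split_ifs <;> simp

theorem exists_isPhasedPauli {P : Matrix (Fin 2) (Fin 2) ℂ} (hP : P = Xm ∨ P = Ym ∨ P = Zm) :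
    ∃ p ≠ 0, IsPhasedPauli p P := by
  rcases hP with rfl | rfl | rfl
  · exact ⟨(1, 0), by decide, 1, by simp, by simp⟩
  · refine ⟨(1, 1), by decide, Complex.I, by simp, ?_⟩
    ext i j
    fin_cases i <;> fin_cases j <;> simp [Xm, Ym, Zm]
  · exact ⟨(0, 1), by decide, 1, by simp, by simp⟩

def conjugatedErrorLabel (p₁ p₂ : PauliLabel) (t v v' : Fin 2) : PauliLabel :=
  Prod.swap^[t] (gateAction v' p₂ + gateAction v p₁)

theorem IsPhasedPauli.trap_conj {p₁ p₂ : PauliLabel} {P₁ P₂ : Matrix (Fin 2) (Fin 2) ℂ}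
    (hP₁ : IsPhasedPauli p₁ P₁) (hP₂ : IsPhasedPauli p₂ P₂) (t v v' : Fin 2) :
    IsPhasedPauli (conjugatedErrorLabel p₁ p₂ t v v')
      (Hm ^ (t : ℕ) * (![Hm, Sm] v')ᴴ * P₂ * ![Hm, Sm] v' * (![Hm, Sm] v)ᴴ *
        P₁ * ![Hm, Sm] v * Hm ^ (t : ℕ)) := by
  have h := ((hP₂.gate_conj v').mul (hP₁.gate_conj v)).Hm_pow_conj t
  simpa only [Matrix.mul_assoc, conjugatedErrorLabel] using h

theorem sum_undetected_le {p₁ p₂ : PauliLabel} (hp₁ : p₁ ≠ 0) (hp₂ : p₂ ≠ 0) :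
    ∑ t : Fin 2, ∑ v : Fin 2, ∑ v' : Fin 2,
      (if (conjugatedErrorLabel p₁ p₂ t v v').2 = 0 then 1 else 0) ≤ 6 := by
  revert p₁ p₂
  decide

/-- **Class-3 two-band errors in neighboring bands, single-qubit case.**
For all `P₁, P₂ ∈ {X, Y, Z}`,
`(1/2) ∑_{t∈{0,1}} (1/4) ∑_{V,V'∈{H,S}} |⟨+| H^t V'† P₂ V' V† P₁ V H^t |+⟩|² ≤ 3/4`. -/
theorem class3_neighboring_bands_single_qubit
    (P₁ P₂ : Matrix (Fin 2) (Fin 2) ℂ)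
    (hP₁ : P₁ = Xm ∨ P₁ = Ym ∨ P₁ = Zm) (hP₂ : P₂ = Xm ∨ P₂ = Ym ∨ P₂ = Zm) :
    (1 / 2 : ℝ) * ∑ t : Fin 2, (1 / 4) * ∑ v : Fin 2, ∑ v' : Fin 2,
        ‖plusBraket1
          (Hm ^ (t : ℕ) * (![Hm, Sm] v')ᴴ * P₂ * ![Hm, Sm] v' * (![Hm, Sm] v)ᴴ *
            P₁ * ![Hm, Sm] v * Hm ^ (t : ℕ))‖ ^ 2
      ≤ 3 / 4 := by
  obtain ⟨p₁, hp₁, hP₁⟩ := exists_isPhasedPauli hP₁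
  obtain ⟨p₂, hp₂, hP₂⟩ := exists_isPhasedPauli hP₂
  have hcount : (∑ t : Fin 2, ∑ v : Fin 2, ∑ v' : Fin 2,
      if (conjugatedErrorLabel p₁ p₂ t v v').2 = 0 then (1 : ℝ) else 0) ≤ 6 := by
    exact_mod_cast sum_undetected_le hp₁ hp₂
  simp only [fun t v v' => (hP₁.trap_conj hP₂ t v v').norm_plusBraket1_sq, ← Finset.mul_sum]
  linarith
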